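/- Let Φ : ℝ^n ⇉ ℝ^m be a polyhedral sublinear mapping and 𝓛 ⊆ ℝ^m a linear subspace. If Φ is relatively surjective, then H(Φ|𝓛) = ‖Φ⁻¹|𝓛‖ = max{ ‖Π_{Im(Φ)∩𝓛}(v)‖* : v ∈ ℝ^m, u ∈ Φ*(v), ‖u‖* ≤ 1 } = 1 / min{ ‖u‖* : u ∈ Φ*(v), ‖Π_{Im(Φ)∩𝓛}(v)‖* = 1 }. -/

import Mathlib

/-!
STATEMENT 3 (Proposition on `‖Φ⁻¹|𝓛‖` for relatively surjective `Φ`):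
if the polyhedral sublinear mapping `Φ : ℝ^n ⇉ ℝ^m` is relatively surjective
(its image is the linear subspace `W`), then
`H(Φ|𝓛) = ‖Φ⁻¹|𝓛‖ = max{‖Π_{Im(Φ)∩𝓛}(v)‖* : u ∈ Φ*(v), ‖u‖* ≤ 1}`
`= 1 / min{‖u‖* : u ∈ Φ*(v), ‖Π_{Im(Φ)∩𝓛}(v)‖* = 1}`.
Here `ℝ^n, ℝ^m` are the Euclidean spaces with their inner products,
`‖·‖*` is the dual norm and `Π` the orthogonal projection.
-/

open Metric

noncomputable section

/-- The dual norm: `‖v‖* = max_{‖x‖ ≤ 1} ⟨v, x⟩`. -/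
def dualNormEu {d : ℕ} (v : EuclideanSpace ℝ (Fin d)) : ℝ :=
  sSup {t | ∃ x : EuclideanSpace ℝ (Fin d), ‖x‖ ≤ 1 ∧ t = (inner ℝ v x : ℝ)}

/-- The graph of a set-valued mapping. -/
def svGraphE {n m : ℕ} (Φ : EuclideanSpace ℝ (Fin n) → Set (EuclideanSpace ℝ (Fin m))) :
    Set (EuclideanSpace ℝ (Fin n) × EuclideanSpace ℝ (Fin m)) :=
  {p | p.2 ∈ Φ p.1}

/-- A polyhedral cone: an intersection of finitely many closed halfspaces through
the origin. -/
def IsPolyhedralCone {E : Type*} [AddCommGroup E] [Module ℝ E] (K : Set E) : Prop :=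
  ∃ (k : ℕ) (f : Fin k → (E →ₗ[ℝ] ℝ)), K = {x | ∀ i, 0 ≤ f i x}

/-- The tangent cone to `K` at `p`. -/
def tangConeAt {E : Type*} [AddCommGroup E] [Module ℝ E] (K : Set E) (p : E) : Set E :=
  {z | ∃ t : ℝ, 0 < t ∧ p + t • z ∈ K}

/-- The collection `𝓣(K)` of tangent cones of `K`. -/
def tangentCones {E : Type*} [AddCommGroup E] [Module ℝ E] (K : Set E) : Set (Set E) :=
  {T | ∃ p ∈ K, T = tangConeAt K p}

/-- The mapping with graph `T` is relatively surjective. -/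
def RelSurjGraph {n m : ℕ}
    (T : Set (EuclideanSpace ℝ (Fin n) × EuclideanSpace ℝ (Fin m))) : Prop :=
  ∃ W : Submodule ℝ (EuclideanSpace ℝ (Fin m)),
    {y | ∃ x, (x, y) ∈ T} = (W : Set (EuclideanSpace ℝ (Fin m)))

/-- `‖Φ_T⁻¹ | 𝓛‖`. -/
def nrmInvRes {n m : ℕ} (T : Set (EuclideanSpace ℝ (Fin n) × EuclideanSpace ℝ (Fin m)))
    (L : Submodule ℝ (EuclideanSpace ℝ (Fin m))) : ℝ :=
  sSup {t | ∃ y : EuclideanSpace ℝ (Fin m), (∃ x, (x, y) ∈ T) ∧ y ∈ L ∧ ‖y‖ ≤ 1 ∧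
    t = sInf {r | ∃ x : EuclideanSpace ℝ (Fin n), (x, y) ∈ T ∧ r = ‖x‖}}

/-- The Hoffman constant `H(Φ|𝓛) = max_{T ∈ S(Φ)} ‖Φ_T⁻¹|𝓛‖`. -/
def HoffSV {n m : ℕ} (Φ : EuclideanSpace ℝ (Fin n) → Set (EuclideanSpace ℝ (Fin m)))
    (L : Submodule ℝ (EuclideanSpace ℝ (Fin m))) : ℝ :=
  sSup {t | ∃ T ∈ tangentCones (svGraphE Φ), RelSurjGraph T ∧ t = nrmInvRes T L}

/-- The upper adjoint `Φ*`: `u ∈ Φ*(v) ↔ ⟨u,x⟩ ≤ ⟨v,y⟩ for all (x,y) ∈ graph Φ`. -/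
def upperAdjoint {n m : ℕ} (Φ : EuclideanSpace ℝ (Fin n) → Set (EuclideanSpace ℝ (Fin m)))
    (v : EuclideanSpace ℝ (Fin m)) : Set (EuclideanSpace ℝ (Fin n)) :=
  {u | ∀ x y, y ∈ Φ x → (inner ℝ u x : ℝ) ≤ (inner ℝ v y : ℝ)}

/-!
Let `m(y) = dist(0, Φ⁻¹(y))`. Every tangent cone `T_K(p)` of the graph `K` contains `K` and has
its image inside `Im Φ`, and `T_K(0) = K`; hence `H(Φ|𝓛) = ‖Φ⁻¹|𝓛‖`, which is finite because
`(x, y) ↦ dist(x, Φ⁻¹(Π_{Im Φ} y))` is sublinear, hence continuous.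

Hahn–Banach for that sublinear function at `(0, y)` gives a linear form `ℓ = ⟨u, ·⟩ - ⟨v, ·⟩` with
`ℓ ≤ 0` on `K` (so `u ∈ Φ*(v)`), `ℓ(x, 0) ≤ ‖x‖` (so `‖u‖ ≤ 1`) and `-⟨v, y⟩ = m(y)`, while
`-⟨v, y⟩ ≤ m(y)` for every such pair. Taking suprema over the unit ball of `Im Φ ∩ 𝓛` turns
`-⟨v, y⟩` into `‖Π_{Im Φ ∩ 𝓛} v‖`. The last formula holds because the pairs `(‖u‖, ‖Π v‖)` with
`u ∈ Φ*(v)` form a cone.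
-/

open RealInnerProductSpace
open scoped Pointwise

-- All multiples `c * b v` lie in the bounded set, so `b v` can only be `0`.
lemma eq_zero_of_homogeneous_of_bddAbove {α β : Type*} {A : β → Set α} {a : α → ℝ} {b : β → ℝ}
    (hb : ∀ v, 0 ≤ b v)
    (hsmul : ∀ v, ∀ u ∈ A v, ∀ c : ℝ, 0 < c → ∃ v', ∃ u' ∈ A v', a u' = c * a u ∧ b v' = c * b v)
    (hbdd : BddAbove {t | ∃ v, ∃ u ∈ A v, a u ≤ 1 ∧ t = b v}) {v : β} {u : α} (hu : u ∈ A v)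
    (hau : a u = 0) : b v = 0 := by
  obtain ⟨M, hM⟩ := hbdd
  by_contra hne
  have hv : 0 < b v := (hb v).lt_of_ne' hne
  have hM0 : 0 ≤ M := (hb v).trans (hM ⟨v, u, hu, hau.le.trans zero_le_one, rfl⟩)
  obtain ⟨v', u', hu', ha', hb'⟩ := hsmul v u hu ((M + 1) / b v) (by positivity)
  have := hM ⟨v', u', hu', by rw [ha', hau, mul_zero]; exact zero_le_one, rfl⟩
  rw [hb', div_mul_cancel₀ _ hv.ne'] at this
  linarith

lemma sSup_eq_one_div_sInf_of_homogeneous {α β : Type*} (A : β → Set α) (a : α → ℝ) (b : β → ℝ)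
    (ha : ∀ u, 0 ≤ a u) (hb : ∀ v, 0 ≤ b v)
    (hsmul : ∀ v, ∀ u ∈ A v, ∀ c : ℝ, 0 < c → ∃ v', ∃ u' ∈ A v', a u' = c * a u ∧ b v' = c * b v)
    (hbdd : BddAbove {t | ∃ v, ∃ u ∈ A v, a u ≤ 1 ∧ t = b v}) :
    sSup {t | ∃ v, ∃ u ∈ A v, a u ≤ 1 ∧ t = b v} =
      1 / sInf {t | ∃ v, ∃ u ∈ A v, b v = 1 ∧ t = a u} := by
  set D := {t | ∃ v, ∃ u ∈ A v, a u ≤ 1 ∧ t = b v}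
  set D' := {t | ∃ v, ∃ u ∈ A v, b v = 1 ∧ t = a u}
  have hD_le : ∀ t ∈ D, t ≤ sSup D := fun t ht => le_csSup hbdd ht
  have hD'_of_pos : ∀ v, ∀ u ∈ A v, 0 < b v → a u / b v ∈ D' := by
    intro v u hu hv
    obtain ⟨v', u', hu', ha', hb'⟩ := hsmul v u hu (b v)⁻¹ (inv_pos.mpr hv)
    exact ⟨v', u', hu', by rw [hb', inv_mul_cancel₀ hv.ne'], by rw [ha', div_eq_inv_mul]⟩
  have hD_of_pos : ∀ v, ∀ u ∈ A v, 0 < a u → b v / a u ∈ D := by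
    intro v u hu hv
    obtain ⟨v', u', hu', ha', hb'⟩ := hsmul v u hu (a u)⁻¹ (inv_pos.mpr hv)
    exact ⟨v', u', hu', by rw [ha', inv_mul_cancel₀ hv.ne'], by rw [hb', div_eq_inv_mul]⟩
  rcases D'.eq_empty_or_nonempty with hD'_empty | ⟨t₀, v₀, u₀, hu₀, hbv₀, rfl⟩
  · rw [hD'_empty, Real.sInf_empty, div_zero]
    refine le_antisymm (Real.sSup_nonpos fun t ⟨v, u, hu, _, ht⟩ => ?_)
      (Real.sSup_nonneg fun t ⟨v, _, _, _, ht⟩ => ht ▸ hb v)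
    refine ht ▸ not_lt.mp fun hv => ?_
    simpa [hD'_empty] using hD'_of_pos v u hu hv
  have hau_pos : ∀ v, ∀ u ∈ A v, b v = 1 → 0 < a u := fun v u hu hv =>
    (ha u).lt_of_ne fun h => by
      simp [eq_zero_of_homogeneous_of_bddAbove hb hsmul hbdd hu h.symm] at hv
  have hsup_pos : 0 < sSup D := by
    have := hD_le _ (hD_of_pos v₀ u₀ hu₀ (hau_pos v₀ u₀ hu₀ hbv₀))
    rw [hbv₀] at this
    exact (one_div_pos.mpr (hau_pos v₀ u₀ hu₀ hbv₀)).trans_le this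
  have hinf_ge : 1 / sSup D ≤ sInf D' := by
    refine le_csInf ⟨_, v₀, u₀, hu₀, hbv₀, rfl⟩ fun t ⟨v, u, hu, hv, ht⟩ => ?_
    have hpos := hau_pos v u hu hv
    have := hD_le _ (hD_of_pos v u hu hpos)
    rw [hv, div_le_iff₀ hpos, mul_comm] at this
    rwa [ht, div_le_iff₀ hsup_pos]
  have hinf_pos : 0 < sInf D' := (one_div_pos.mpr hsup_pos).trans_le hinf_ge
  refine le_antisymm (Real.sSup_le (fun t ⟨v, u, hu, hu1, ht⟩ => ?_) (by positivity)) ?_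
  · rcases (hb v).eq_or_lt with hv | hv
    · rw [ht, ← hv]; positivity
    have hle : sInf D' ≤ a u / b v :=
      csInf_le ⟨0, fun t ⟨v, u, _, _, ht⟩ => ht ▸ ha u⟩ (hD'_of_pos v u hu hv)
    rw [ht, le_div_iff₀ hinf_pos]
    calc b v * sInf D' ≤ b v * (a u / b v) := mul_le_mul_of_nonneg_left hle hv.le
      _ = a u := mul_div_cancel₀ _ hv.ne'
      _ ≤ 1 := hu1
  · rwa [div_le_iff₀ hinf_pos, mul_comm, ← div_le_iff₀ hsup_pos]

lemma infDist_add_add_le {E : Type*} [SeminormedAddCommGroup E] {s t : Set E}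
    (hs : s.Nonempty) (ht : t.Nonempty) (x y : E) :
    infDist (x + y) (s + t) ≤ infDist x s + infDist y t := by
  have := hs.to_subtype
  have := ht.to_subtype
  simp only [infDist_eq_iInf]
  refine le_ciInf_add_ciInf fun a b => ?_
  refine ciInf_le_of_le ⟨0, Set.forall_mem_range.2 fun _ => dist_nonneg⟩
    ⟨a + b, Set.add_mem_add a.2 b.2⟩ ?_
  exact dist_add_add_le _ _ _ _

lemma exists_linearMap_eq_le_of_sublinear {E : Type*} [AddCommGroup E] [Module ℝ E] {N : E → ℝ}
    (hN_smul : ∀ c : ℝ, 0 < c → ∀ x, N (c • x) = c * N x) (hN_add : ∀ x y, N (x + y) ≤ N x + N y)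
    (x₀ : E) : ∃ g : E →ₗ[ℝ] ℝ, g x₀ = N x₀ ∧ ∀ x, g x ≤ N x := by
  have hN_zero : N 0 = 0 := by
    have := hN_smul 2 two_pos 0
    rw [smul_zero] at this
    linarith
  have hN_line : ∀ c : ℝ, c * N x₀ ≤ N (c • x₀) := by
    intro c
    rcases lt_trichotomy c 0 with hc | rfl | hc
    · have := hN_add (c • x₀) ((-c) • x₀)
      rw [← add_smul, add_neg_cancel, zero_smul, hN_zero, hN_smul _ (neg_pos.mpr hc)] at this
      linarith
    · simp [hN_zero]
    · exact (hN_smul c hc x₀).ge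
  let f : E →ₗ.[ℝ] ℝ := LinearPMap.mkSpanSingleton' x₀ (N x₀) fun c hc => by
    rcases smul_eq_zero.mp hc with rfl | rfl
    · exact zero_smul _ _
    · simp [hN_zero]
  obtain ⟨g, hgf, hg⟩ := exists_extension_of_le_sublinear f N hN_smul hN_add <| by
    rintro ⟨x, hx⟩
    obtain ⟨c, rfl⟩ := Submodule.mem_span_singleton.mp hx
    rw [LinearPMap.mkSpanSingleton'_apply]
    exact hN_line c
  exact ⟨g, (hgf ⟨x₀, Submodule.mem_span_singleton_self x₀⟩).trans
    (LinearPMap.mkSpanSingleton'_apply_self _ _ _ _), hg⟩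

lemma bddAbove_image_closedBall_of_sublinear {G : Type*} [NormedAddCommGroup G]
    [NormedSpace ℝ G] [FiniteDimensional ℝ G] {f : G → ℝ}
    (hf_smul : ∀ c : ℝ, 0 < c → ∀ x, f (c • x) = c * f x) (hf_add : ∀ x y, f (x + y) ≤ f x + f y) :
    BddAbove (f '' closedBall 0 1) := by
  have hf_zero : f 0 = 0 := by
    have := hf_smul 2 two_pos 0
    rw [smul_zero] at this
    linarith
  have hf_smul' : ∀ c : ℝ, 0 ≤ c → ∀ x, f (c • x) = c * f x := by
    intro c hc x
    rcases hc.eq_or_lt with rfl | hc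
    · simp [hf_zero]
    · exact hf_smul c hc x
  have hconv : ConvexOn ℝ Set.univ f := by
    refine ⟨convex_univ, fun x _ y _ a b ha hb _ => ?_⟩
    simpa only [hf_smul' a ha, hf_smul' b hb, smul_eq_mul] using hf_add (a • x) (b • y)
  exact (isCompact_closedBall 0 1).bddAbove_image
    ((hconv.continuousOn isOpen_univ).mono (Set.subset_univ _))

section Cones

variable {E : Type*} [AddCommGroup E] [Module ℝ E]

lemma IsPolyhedralCone.exists_pointedCone_eq {K : Set E} (hK : IsPolyhedralCone K) :
    ∃ C : PointedCone ℝ E, (C : Set E) = K := by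
  obtain ⟨k, f, rfl⟩ := hK
  exact ⟨{ carrier := {x | ∀ i, 0 ≤ f i x}
           add_mem' := fun hx hy i => by simpa using add_nonneg (hx i) (hy i)
           zero_mem' := fun i => by simp
           smul_mem' := fun c x hx i => by
             change 0 ≤ f i ((c : ℝ) • x)
             rw [map_smul, smul_eq_mul]
             exact mul_nonneg c.2 (hx i) }, rfl⟩

lemma PointedCone.tangConeAt_zero (C : PointedCone ℝ E) : tangConeAt (C : Set E) 0 = C := by
  ext z
  simp only [tangConeAt, zero_add, Set.mem_ofPred_eq, SetLike.mem_coe]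
  refine ⟨fun ⟨t, ht, hz⟩ => ?_, fun hz => ⟨1, one_pos, by rwa [one_smul]⟩⟩
  simpa [smul_smul, inv_mul_cancel₀ ht.ne'] using C.smul_mem (inv_nonneg.mpr ht.le) hz

lemma PointedCone.subset_tangConeAt {C : PointedCone ℝ E} {p : E} (hp : p ∈ C) :
    (C : Set E) ⊆ tangConeAt C p :=
  fun z hz => ⟨1, one_pos, by simpa using C.add_mem hp hz⟩

lemma tangConeAt_subset_of_subset {K : Set E} {S : Submodule ℝ E} (hK : K ⊆ S) {p : E}
    (hp : p ∈ K) : tangConeAt K p ⊆ S := by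
  rintro z ⟨t, ht, hz⟩
  have : t • z ∈ S := by simpa using S.sub_mem (hK hz) (hK hp)
  exact (S.smul_mem_iff ht.ne').mp this

end Cones

section GraphFiber

variable {E F : Type*}

def graphFiber (K : Set (E × F)) (y : F) : Set E := {x | (x, y) ∈ K}

lemma graphFiber_mono {K T : Set (E × F)} (h : K ⊆ T) (y : F) :
    graphFiber K y ⊆ graphFiber T y :=
  fun _ hx => h hx

lemma sInf_norm_eq_infDist_graphFiber [SeminormedAddCommGroup E] (K : Set (E × F)) (y : F) :
    sInf {r | ∃ x, (x, y) ∈ K ∧ r = ‖x‖} = infDist 0 (graphFiber K y) := by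
  rw [infDist_eq_iInf, iInf]
  congr 1
  ext r
  simp [graphFiber, eq_comm]

variable [AddCommGroup E] [Module ℝ E] [AddCommGroup F] [Module ℝ F]

lemma PointedCone.graphFiber_add_subset (C : PointedCone ℝ (E × F)) (y y' : F) :
    (graphFiber C y + graphFiber C y' : Set E) ⊆ graphFiber C (y + y') := by
  rintro _ ⟨x, hx, x', hx', rfl⟩
  exact C.add_mem hx hx'

lemma PointedCone.graphFiber_smul (C : PointedCone ℝ (E × F)) {c : ℝ} (hc : 0 < c) (y : F) :
    (graphFiber C (c • y) : Set E) = c • graphFiber C y := by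
  ext x
  refine ⟨fun hx => ⟨c⁻¹ • x, ?_, smul_inv_smul₀ hc.ne' x⟩, ?_⟩
  · simpa [graphFiber, smul_smul, inv_mul_cancel₀ hc.ne'] using
      C.smul_mem (inv_nonneg.mpr hc.le) hx
  · rintro ⟨x, hx, rfl⟩
    exact C.smul_mem hc.le hx

end GraphFiber

section Projection

variable {F : Type*} [NormedAddCommGroup F] [InnerProductSpace ℝ F]

lemma real_inner_le_norm_starProjection (U : Submodule ℝ F) [U.HasOrthogonalProjection] (v : F)
    {y : F} (hy : y ∈ U) (hy1 : ‖y‖ ≤ 1) : ⟪v, y⟫ ≤ ‖U.starProjection v‖ := by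
  calc ⟪v, y⟫ = ⟪U.starProjection v, y⟫ := by
        rw [Submodule.inner_starProjection_left_eq_right, U.starProjection_eq_self_iff.mpr hy]
    _ ≤ ‖U.starProjection v‖ * ‖y‖ := real_inner_le_norm _ _
    _ ≤ ‖U.starProjection v‖ := mul_le_of_le_one_right (norm_nonneg _) hy1

lemma exists_real_inner_eq_norm_starProjection (U : Submodule ℝ F) [U.HasOrthogonalProjection]
    (v : F) : ∃ y ∈ U, ‖y‖ ≤ 1 ∧ ⟪v, y⟫ = ‖U.starProjection v‖ := by
  have hvw : ⟪v, U.starProjection v⟫ = ‖U.starProjection v‖ ^ 2 := by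
    rw [← real_inner_self_eq_norm_sq, Submodule.inner_starProjection_left_eq_right,
      U.starProjection_eq_self_iff.mpr (U.starProjection_apply_mem v)]
  refine ⟨‖U.starProjection v‖⁻¹ • U.starProjection v,
    U.smul_mem _ (U.starProjection_apply_mem v), ?_, ?_⟩
  · rw [norm_smul, norm_inv, norm_norm]
    exact inv_mul_le_one_of_le₀ le_rfl (norm_nonneg _)
  · rw [real_inner_smul_right, hvw]
    rcases eq_or_ne ‖U.starProjection v‖ 0 with hw | hw
    · simp [hw]
    · field_simp

end Projection

section Duality

variable {E F : Type*} [NormedAddCommGroup E] [InnerProductSpace ℝ E]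
  [NormedAddCommGroup F] [InnerProductSpace ℝ F]

def graphUpperAdjoint (K : Set (E × F)) (v : F) : Set E := {u | ∀ p ∈ K, ⟪u, p.1⟫ ≤ ⟪v, p.2⟫}

lemma PointedCone.smul_mem_graphUpperAdjoint (C : PointedCone ℝ (E × F)) {u : E} {v : F}
    (huv : u ∈ graphUpperAdjoint C v) {c : ℝ} (hc : 0 ≤ c) :
    c • u ∈ graphUpperAdjoint C (c • v) := fun p hp => by
  simpa only [real_inner_smul_left] using mul_le_mul_of_nonneg_left (huv p hp) hc

lemma neg_inner_le_infDist_graphFiber {K : Set (E × F)} {u : E} {v : F}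
    (huv : u ∈ graphUpperAdjoint K v) (hu : ‖u‖ ≤ 1) {y : F} (hy : (graphFiber K y).Nonempty) :
    -⟪v, y⟫ ≤ infDist 0 (graphFiber K y) := by
  refine (le_infDist hy).2 fun x hx => ?_
  calc -⟪v, y⟫ ≤ -⟪u, x⟫ := neg_le_neg (huv (x, y) hx)
    _ ≤ ‖u‖ * ‖x‖ := (neg_le_abs _).trans (abs_real_inner_le_norm u x)
    _ ≤ ‖x‖ := mul_le_of_le_one_left (norm_nonneg x) hu
    _ = dist 0 x := (dist_zero_left x).symm

lemma exists_norm_starProjection_le_infDist {C : PointedCone ℝ (E × F)} {W : Submodule ℝ F}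
    (hW : ∀ y, (graphFiber C y : Set E).Nonempty ↔ y ∈ W)
    (L : Submodule ℝ F) [(W ⊓ L).HasOrthogonalProjection] {u : E} {v : F}
    (huv : u ∈ graphUpperAdjoint C v) (hu : ‖u‖ ≤ 1) :
    ∃ y ∈ W ⊓ L, ‖y‖ ≤ 1 ∧ ‖(W ⊓ L).starProjection v‖ ≤ infDist (0 : E) (graphFiber C y) := by
  obtain ⟨y, hy, hy1, hvy⟩ := exists_real_inner_eq_norm_starProjection (W ⊓ L) v
  refine ⟨-y, neg_mem hy, by rwa [norm_neg], ?_⟩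
  simpa [inner_neg_right, hvy] using
    neg_inner_le_infDist_graphFiber huv hu ((hW _).2 (neg_mem (Submodule.mem_inf.mp hy).1))

variable (C : PointedCone ℝ (E × F)) (W : Submodule ℝ F) [W.HasOrthogonalProjection]

-- Without `W.starProjection`, fibres over points outside `W` would be empty, `infDist` to them
-- would be `0`, and subadditivity would fail.
def fiberDist (p : E × F) : ℝ := infDist p.1 (graphFiber C (W.starProjection p.2) : Set E)

lemma fiberDist_smul {c : ℝ} (hc : 0 < c) (p : E × F) :
    fiberDist C W (c • p) = c * fiberDist C W p := by
  simp only [fiberDist, Prod.smul_fst, Prod.smul_snd, map_smul, C.graphFiber_smul hc,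
    infDist_smul₀ hc.ne', Real.norm_of_nonneg hc.le]

lemma fiberDist_add_le (hW : ∀ y ∈ W, (graphFiber C y : Set E).Nonempty) (p q : E × F) :
    fiberDist C W (p + q) ≤ fiberDist C W p + fiberDist C W q := by
  simp only [fiberDist, Prod.fst_add, Prod.snd_add, map_add]
  have hp := hW _ (W.starProjection_apply_mem p.2)
  have hq := hW _ (W.starProjection_apply_mem q.2)
  exact (infDist_le_infDist_of_subset (C.graphFiber_add_subset _ _) (hp.add hq)).trans
    (infDist_add_add_le hp hq _ _)

lemma fiberDist_eq_infDist {x : E} {y : F} (hy : y ∈ W) :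
    fiberDist C W (x, y) = infDist x (graphFiber C y : Set E) := by
  rw [fiberDist, W.starProjection_eq_self_iff.mpr hy]

variable {C W} [FiniteDimensional ℝ E] [FiniteDimensional ℝ F]

lemma exists_bound_infDist_graphFiber
    (hW : ∀ y ∈ W, (graphFiber C y : Set E).Nonempty) :
    ∃ B, ∀ y ∈ W, ‖y‖ ≤ 1 → infDist (0 : E) (graphFiber C y) ≤ B := by
  obtain ⟨B, hB⟩ := bddAbove_image_closedBall_of_sublinear (fun c hc => fiberDist_smul C W hc)
    (fiberDist_add_le C W hW)
  refine ⟨B, fun y hy hy1 => ?_⟩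
  rw [← fiberDist_eq_infDist C W hy]
  exact hB ⟨((0 : E), y), by simpa using hy1, rfl⟩

lemma exists_mem_graphUpperAdjoint_neg_inner_eq_infDist
    (hW : ∀ y, (graphFiber C y : Set E).Nonempty ↔ y ∈ W) {z : F} (hz : z ∈ W) :
    ∃ (u : E) (v : F), u ∈ graphUpperAdjoint C v ∧ ‖u‖ ≤ 1 ∧
      -⟪v, z⟫ = infDist (0 : E) (graphFiber C z) := by
  obtain ⟨g, hgz, hg⟩ := exists_linearMap_eq_le_of_sublinear (fun c hc => fiberDist_smul C W hc)
    (fiberDist_add_le C W fun y hy => (hW y).2 hy) ((0 : E), z)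
  set u := (InnerProductSpace.toDual ℝ E).symm (g ∘ₗ LinearMap.inl ℝ E F).toContinuousLinearMap
  set v := -(InnerProductSpace.toDual ℝ F).symm (g ∘ₗ LinearMap.inr ℝ E F).toContinuousLinearMap
  have hu : ∀ x, ⟪u, x⟫ = g (x, 0) := fun x => by simp [u, InnerProductSpace.toDual_symm_apply]
  have hv : ∀ y, ⟪v, y⟫ = -g (0, y) := fun y => by
    simp [v, inner_neg_left, InnerProductSpace.toDual_symm_apply]
  refine ⟨u, v, fun p hp => ?_, ?_, ?_⟩
  · have hp0 : g p ≤ 0 := by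
      have hpW : p.2 ∈ W := (hW p.2).1 ⟨p.1, hp⟩
      refine (hg p).trans_eq ?_
      rw [← Prod.mk.eta (p := p), fiberDist_eq_infDist C W hpW]
      exact infDist_zero_of_mem hp
    have hsplit : g p = g (p.1, 0) + g (0, p.2) := by rw [← map_add]; simp
    rw [hu, hv]
    linarith
  · have hsq : ‖u‖ ^ 2 ≤ ‖u‖ := by
      rw [← real_inner_self_eq_norm_sq, hu]
      refine (hg _).trans ?_
      rw [fiberDist_eq_infDist C W W.zero_mem]
      have h0 : (0 : E) ∈ (graphFiber C (0 : F) : Set E) := C.zero_mem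
      simpa using infDist_le_dist_of_mem (x := u) h0
    nlinarith [norm_nonneg u]
  · rw [hv, neg_neg, hgz, fiberDist_eq_infDist C W hz]

theorem sSup_infDist_graphFiber_eq_sSup_norm_starProjection
    (hW : ∀ y, (graphFiber C y : Set E).Nonempty ↔ y ∈ W) (L : Submodule ℝ F) :
    sSup {t | ∃ y, (graphFiber C y : Set E).Nonempty ∧ y ∈ L ∧ ‖y‖ ≤ 1 ∧
        t = infDist (0 : E) (graphFiber C y)} =
      sSup {t | ∃ v, ∃ u ∈ (graphUpperAdjoint C v : Set E), ‖u‖ ≤ 1 ∧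
        t = ‖(W ⊓ L).starProjection v‖} := by
  refine csSup_eq_csSup_of_forall_exists_le ?_ ?_
  · rintro _ ⟨y, hy, hyL, hy1, rfl⟩
    have hyW := (hW y).1 hy
    obtain ⟨u, v, huv, hu, hvy⟩ := exists_mem_graphUpperAdjoint_neg_inner_eq_infDist hW hyW
    refine ⟨_, ⟨v, u, huv, hu, rfl⟩, ?_⟩
    rw [← hvy, ← inner_neg_right]
    exact real_inner_le_norm_starProjection (W ⊓ L) v (neg_mem ⟨hyW, hyL⟩) (by rwa [norm_neg])
  · rintro _ ⟨v, u, huv, hu, rfl⟩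
    obtain ⟨y, hy, hy1, hle⟩ := exists_norm_starProjection_le_infDist hW L huv hu
    have hyW := (Submodule.mem_inf.mp hy).1
    exact ⟨_, ⟨y, (hW y).2 hyW, (Submodule.mem_inf.mp hy).2, hy1, rfl⟩, hle⟩

end Duality

section Euclidean

variable {n m : ℕ}

local notation "𝔼" d:max => EuclideanSpace ℝ (Fin d)

lemma dualNormEu_eq_norm {d : ℕ} (v : 𝔼 d) : dualNormEu v = ‖v‖ := by
  refine IsGreatest.csSup_eq ⟨?_, ?_⟩
  · obtain ⟨y, -, hy1, hvy⟩ := exists_real_inner_eq_norm_starProjection ⊤ v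
    exact ⟨y, hy1, by rw [hvy, Submodule.starProjection_top]; rfl⟩
  · rintro _ ⟨x, hx, rfl⟩
    simpa [Submodule.starProjection_top] using
      real_inner_le_norm_starProjection ⊤ v Submodule.mem_top hx

lemma upperAdjoint_eq_graphUpperAdjoint (Φ : 𝔼 n → Set (𝔼 m)) :
    upperAdjoint Φ = graphUpperAdjoint (svGraphE Φ) := by
  ext v u
  exact ⟨fun h p hp => h p.1 p.2 hp, fun h x y hy => h (x, y) hy⟩

lemma nrmInvRes_eq_sSup_infDist (T : Set (𝔼 n × 𝔼 m)) (L : Submodule ℝ (𝔼 m)) :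
    nrmInvRes T L = sSup {t | ∃ y, (graphFiber T y).Nonempty ∧ y ∈ L ∧ ‖y‖ ≤ 1 ∧
      t = infDist 0 (graphFiber T y)} := by
  simp only [nrmInvRes, sInf_norm_eq_infDist_graphFiber]
  rfl

variable {C : PointedCone ℝ (𝔼 n × 𝔼 m)} {W : Submodule ℝ (𝔼 m)}

lemma nrmInvRes_tangConeAt_le
    (hW : ∀ y, (graphFiber C y : Set (𝔼 n)).Nonempty ↔ y ∈ W) {B : ℝ}
    (hB : ∀ y ∈ W, ‖y‖ ≤ 1 → infDist 0 (graphFiber C y : Set (𝔼 n)) ≤ B)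
    (L : Submodule ℝ (𝔼 m)) {p} (hp : p ∈ C) :
    nrmInvRes (tangConeAt (C : Set (𝔼 n × 𝔼 m)) p) L ≤ nrmInvRes (C : Set (𝔼 n × 𝔼 m)) L := by
  rw [nrmInvRes_eq_sSup_infDist, nrmInvRes_eq_sSup_infDist]
  have hbdd : BddAbove {t | ∃ y, (graphFiber C y : Set (𝔼 n)).Nonempty ∧
      y ∈ L ∧ ‖y‖ ≤ 1 ∧ t = infDist (0 : 𝔼 n) (graphFiber C y)} :=
    ⟨B, fun t ⟨y, hy, _, hy1, ht⟩ => ht ▸ hB y ((hW y).1 hy) hy1⟩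
  have hT : tangConeAt (C : Set (𝔼 n × 𝔼 m)) p ⊆ ((⊤ : Submodule ℝ (𝔼 n)).prod W : Set _) :=
    tangConeAt_subset_of_subset
      (fun q hq => Submodule.mem_prod.mpr ⟨Submodule.mem_top, (hW q.2).1 ⟨q.1, hq⟩⟩) hp
  refine Real.sSup_le (fun t ⟨y, ⟨x, hx⟩, hyL, hy1, ht⟩ => ?_)
    (Real.sSup_nonneg fun t ⟨_, _, _, _, ht⟩ => ht ▸ infDist_nonneg)
  have hyC := (hW y).2 (Submodule.mem_prod.mp (hT hx)).2
  rw [ht]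
  exact (infDist_le_infDist_of_subset (graphFiber_mono (C.subset_tangConeAt hp) y) hyC).trans
    (le_csSup hbdd ⟨y, hyC, hyL, hy1, rfl⟩)

lemma hoffSV_eq_nrmInvRes {Φ : 𝔼 n → Set (𝔼 m)}
    (hC : (C : Set (𝔼 n × 𝔼 m)) = svGraphE Φ)
    (hW : ∀ y, (graphFiber C y : Set (𝔼 n)).Nonempty ↔ y ∈ W) {B : ℝ}
    (hB : ∀ y ∈ W, ‖y‖ ≤ 1 → infDist 0 (graphFiber C y : Set (𝔼 n)) ≤ B)
    (L : Submodule ℝ (𝔼 m)) :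
    HoffSV Φ L = nrmInvRes (C : Set (𝔼 n × 𝔼 m)) L := by
  rw [HoffSV, ← hC]
  refine IsGreatest.csSup_eq ⟨⟨C, ⟨0, C.zero_mem, C.tangConeAt_zero.symm⟩, ⟨W, ?_⟩, rfl⟩, ?_⟩
  · ext y
    exact hW y
  · rintro _ ⟨T, ⟨p, hp, rfl⟩, -, rfl⟩
    exact nrmInvRes_tangConeAt_le hW hB L hp

end Euclidean

theorem hoffman_relSurj {n m : ℕ}
    (Φ : EuclideanSpace ℝ (Fin n) → Set (EuclideanSpace ℝ (Fin m)))
    (hK : IsPolyhedralCone (svGraphE Φ))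
    (L W : Submodule ℝ (EuclideanSpace ℝ (Fin m)))
    (hW : {y | ∃ x, y ∈ Φ x} = (W : Set (EuclideanSpace ℝ (Fin m)))) :
    HoffSV Φ L = nrmInvRes (svGraphE Φ) L ∧
    HoffSV Φ L = sSup {t | ∃ v : EuclideanSpace ℝ (Fin m),
        ∃ u ∈ upperAdjoint Φ v, dualNormEu u ≤ 1 ∧
          t = dualNormEu ((Submodule.orthogonalProjection (W ⊓ L) v :
            EuclideanSpace ℝ (Fin m)))} ∧
    HoffSV Φ L = 1 / sInf {t | ∃ v : EuclideanSpace ℝ (Fin m),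
        ∃ u ∈ upperAdjoint Φ v,
          dualNormEu ((Submodule.orthogonalProjection (W ⊓ L) v :
            EuclideanSpace ℝ (Fin m))) = 1 ∧ t = dualNormEu u} := by
  obtain ⟨C, hC⟩ := hK.exists_pointedCone_eq
  have hCW : ∀ y, (graphFiber C y : Set (EuclideanSpace ℝ (Fin n))).Nonempty ↔ y ∈ W := by
    intro y
    rw [← SetLike.mem_coe, ← hW, hC]
    rfl
  obtain ⟨B, hB⟩ := exists_bound_infDist_graphFiber fun y hy => (hCW y).2 hy
  have hHoff := hoffSV_eq_nrmInvRes hC hCW hB L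
  have hdual := (nrmInvRes_eq_sSup_infDist
    (C : Set (EuclideanSpace ℝ (Fin n) × EuclideanSpace ℝ (Fin m))) L).trans
    (sSup_infDist_graphFiber_eq_sSup_norm_starProjection hCW L)
  simp only [dualNormEu_eq_norm, Submodule.coe_orthogonalProjectionOnto_apply,
    upperAdjoint_eq_graphUpperAdjoint, ← hC]
  refine ⟨hHoff, hHoff.trans hdual, (hHoff.trans hdual).trans ?_⟩
  refine sSup_eq_one_div_sInf_of_homogeneous _ _ _ (fun _ => norm_nonneg _)
    (fun _ => norm_nonneg _) (fun v u huv c hc => ?_) ⟨B, ?_⟩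
  · refine ⟨c • v, c • u, C.smul_mem_graphUpperAdjoint huv hc.le, ?_, ?_⟩ <;>
      simp only [map_smul, norm_smul, Real.norm_of_nonneg hc.le]
  · rintro _ ⟨v, u, huv, hu, rfl⟩
    obtain ⟨y, hy, hy1, hle⟩ := exists_norm_starProjection_le_infDist hCW L huv hu
    exact hle.trans (hB y (Submodule.mem_inf.mp hy).1 hy1)

end
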